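/- arXiv:2303.02569 — 3 statements merged into one kernel-verified Lean document; each statement's English description precedes it below -/
import Mathlib

section
/- Let B > 1, let f : ℝ → ℝ be differentiable and convex on (0, ∞), let μ be a measure on a measurable space X, and let d*, dU : X → ℝ be measurable with d* ≥ 0, dU > 0 pointwise, both integrable with ∫ d* dμ = ∫ dU dμ = 1. If d*(x) ≤ B·dU(x) for every x ∈ X, then D_{f̃_B}(d*‖dU) = 0; consequently, for every measurable d : X → ℝ with d ≥ 0, ∫ d dμ = 1 and x ↦ dU(x)·f̃_B(d(x)/dU(x)) μ-integrable, one has D_{f̃_B}(d*‖dU) ≤ D_{f̃_B}(d‖dU), i.e. d* attains the minimum of the relaxed f-divergence to dU. -/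
/-!
Below `β` the relaxed function is the line `u ↦ f'(β) (u - 1)`, and above `β` it is `f` shifted
to meet that line at `β`; by convexity the line is tangent to `f` at `β`, so it minorizes the
relaxed function everywhere. Integrating against `dU`, the divergence of any density from `dU` is
bounded below by `f'(β) (∫ d - ∫ dU) = 0`, with equality when `d ≤ β dU`, since then only the linear
branch is ever evaluated.
-/

open MeasureTheory

/-- The asymmetrically-relaxed function `f̃_β`. -/
noncomputable def relaxed (f : ℝ → ℝ) (β : ℝ) (u : ℝ) : ℝ :=
  if β ≤ u then f u + (-(f β) + deriv f β * (β - 1))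
  else deriv f β * u - deriv f β

open Set

section Pointwise

variable {f : ℝ → ℝ} {β : ℝ}

lemma relaxed_of_le {u : ℝ} (hu : u ≤ β) : relaxed f β u = deriv f β * (u - 1) := by
  unfold relaxed
  split_ifs with h
  · rw [le_antisymm hu h]
    ring
  · ring

lemma deriv_mul_sub_one_le_relaxed (hβ : 0 < β) (hf : DifferentiableAt ℝ f β)
    (hconv : ConvexOn ℝ (Ioi 0) f) (u : ℝ) : deriv f β * (u - 1) ≤ relaxed f β u := by
  rcases le_or_gt u β with hu | hβu
  · exact (relaxed_of_le hu).ge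
  · have hslope := hconv.deriv_le_slope hβ (hβ.trans hβu) hβu hf
    rw [slope_def_field, le_div_iff₀ (sub_pos.2 hβu)] at hslope
    rw [relaxed, if_pos hβu.le]
    linarith

lemma mul_relaxed_div_of_le {p q : ℝ} (hq : 0 < q) (hpq : p ≤ β * q) :
    q * relaxed f β (p / q) = deriv f β * (p - q) := by
  rw [relaxed_of_le ((div_le_iff₀ hq).2 hpq)]
  field_simp

lemma deriv_mul_sub_le_mul_relaxed_div (hβ : 0 < β) (hf : DifferentiableAt ℝ f β)
    (hconv : ConvexOn ℝ (Ioi 0) f) {p q : ℝ} (hq : 0 < q) :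
    deriv f β * (p - q) ≤ q * relaxed f β (p / q) :=
  calc deriv f β * (p - q) = q * (deriv f β * (p / q - 1)) := by field_simp
    _ ≤ q * relaxed f β (p / q) :=
      mul_le_mul_of_nonneg_left (deriv_mul_sub_one_le_relaxed hβ hf hconv _) hq.le

end Pointwise

section Integral

variable {X : Type*} [MeasurableSpace X] {μ : Measure X} {f : ℝ → ℝ} {β : ℝ} {p q : X → ℝ}

lemma integral_const_mul_sub_eq_zero (c : ℝ) (hp : Integrable p μ) (hq : Integrable q μ)
    (hpq : ∫ x, p x ∂μ = ∫ x, q x ∂μ) : ∫ x, c * (p x - q x) ∂μ = 0 := by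
  rw [integral_const_mul, integral_sub hp hq, hpq, sub_self, mul_zero]

theorem integral_mul_relaxed_div_eq_zero (hq0 : ∀ x, 0 < q x) (hp : Integrable p μ)
    (hq : Integrable q μ) (hpq : ∫ x, p x ∂μ = ∫ x, q x ∂μ) (hle : ∀ x, p x ≤ β * q x) :
    ∫ x, q x * relaxed f β (p x / q x) ∂μ = 0 := by
  simp_rw [mul_relaxed_div_of_le (hq0 _) (hle _)]
  exact integral_const_mul_sub_eq_zero _ hp hq hpq

theorem integral_mul_relaxed_div_nonneg (hβ : 0 < β) (hf : DifferentiableAt ℝ f β)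
    (hconv : ConvexOn ℝ (Ioi 0) f) (hq0 : ∀ x, 0 < q x) (hp : Integrable p μ)
    (hq : Integrable q μ) (hpq : ∫ x, p x ∂μ = ∫ x, q x ∂μ)
    (hint : Integrable (fun x => q x * relaxed f β (p x / q x)) μ) :
    0 ≤ ∫ x, q x * relaxed f β (p x / q x) ∂μ :=
  calc 0 = ∫ x, deriv f β * (p x - q x) ∂μ := (integral_const_mul_sub_eq_zero _ hp hq hpq).symm
    _ ≤ ∫ x, q x * relaxed f β (p x / q x) ∂μ :=
      integral_mono ((hp.sub hq).const_mul _) hint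
        fun x => deriv_mul_sub_le_mul_relaxed_div hβ hf hconv (hq0 x)

end Integral

theorem stmt5_general {X : Type*} [MeasurableSpace X] (μ : Measure X)
    (B : ℝ) (hB : 1 < B) (f : ℝ → ℝ)
    (hdiff : DifferentiableOn ℝ f (Set.Ioi 0))
    (hconv : ConvexOn ℝ (Set.Ioi 0) f)
    (dstar dU : X → ℝ)
    (hdU0 : ∀ x, 0 < dU x)
    (hdstarint : Integrable dstar μ) (hdUint : Integrable dU μ)
    (hdstarsum : ∫ x, dstar x ∂μ = 1) (hdUsum : ∫ x, dU x ∂μ = 1)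
    (hconc : ∀ x, dstar x ≤ B * dU x) :
    ∫ x, dU x * relaxed f B (dstar x / dU x) ∂μ = 0 ∧
    ∀ d : X → ℝ, Measurable d → (∀ x, 0 ≤ d x) → ∫ x, d x ∂μ = 1 →
      Integrable (fun x => dU x * relaxed f B (d x / dU x)) μ →
      ∫ x, dU x * relaxed f B (dstar x / dU x) ∂μ ≤
        ∫ x, dU x * relaxed f B (d x / dU x) ∂μ := by
  have hB0 : 0 < B := zero_lt_one.trans hB
  have hzero := integral_mul_relaxed_div_eq_zero (f := f) hdU0 hdstarint hdUint
    (hdstarsum.trans hdUsum.symm) hconc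
  refine ⟨hzero, fun d _ _ hdsum hint => ?_⟩
  have hdint : Integrable d μ := Integrable.of_integral_ne_zero (by simp [hdsum])
  rw [hzero]
  exact integral_mul_relaxed_div_nonneg hB0 (hdiff.differentiableAt (Ioi_mem_nhds hB0)) hconv
    hdU0 hdint hdUint (hdsum.trans hdUsum.symm) hint

theorem stmt5 {X : Type*} [MeasurableSpace X] (μ : Measure X)
    (B : ℝ) (hB : 1 < B) (f : ℝ → ℝ)
    (hdiff : DifferentiableOn ℝ f (Set.Ioi 0))
    (hconv : ConvexOn ℝ (Set.Ioi 0) f)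
    (dstar dU : X → ℝ) (hdstarm : Measurable dstar) (hdUm : Measurable dU)
    (hdstar0 : ∀ x, 0 ≤ dstar x) (hdU0 : ∀ x, 0 < dU x)
    (hdstarint : Integrable dstar μ) (hdUint : Integrable dU μ)
    (hdstarsum : ∫ x, dstar x ∂μ = 1) (hdUsum : ∫ x, dU x ∂μ = 1)
    (hconc : ∀ x, dstar x ≤ B * dU x) :
    ∫ x, dU x * relaxed f B (dstar x / dU x) ∂μ = 0 ∧
    ∀ d : X → ℝ, Measurable d → (∀ x, 0 ≤ d x) → ∫ x, d x ∂μ = 1 →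
      Integrable (fun x => dU x * relaxed f B (d x / dU x)) μ →
      ∫ x, dU x * relaxed f B (dstar x / dU x) ∂μ ≤
        ∫ x, dU x * relaxed f B (d x / dU x) ∂μ :=
  stmt5_general μ B hB f hdiff hconv dstar dU hdU0 hdstarint hdUint hdstarsum hdUsum hconc
end

section
/- Let e ∈ ℝ, α > 0, β > 1 with e ≤ (α + 1)·(log β + 1). Then ω* = exp(e − 1 − α·(log β + 1)) satisfies ω* ≤ β, ω* is the unique maximizer of h over [0, ∞), and h(ω*) = exp(e − 1 − α·(log β + 1)) + α·(log β + 1). -/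
/-!
With `L = log β + 1`, the relaxed function `f̃_β` coincides with the tangent line `L·(ω − 1)` of
`ω·log ω` at `β` for `ω ≤ β` and lies above it everywhere, so
`h(ω) ≤ ω·(e − α·L) − ω·log ω + α·L`, with equality for `ω ≤ β`.
The right-hand side is maximized uniquely at `ω* = exp(e − α·L − 1)`, where `ω·c − ω·log ω`
attains its supremum `exp(c − 1)` (the Legendre transform of `ω·log ω`), and the hypothesis on `e`
is exactly `ω* ≤ β`.
-/

/-- `C_{f,β} = −f(β) + f'(β)·(β − 1)` for `f(u) = u·log u`. -/
noncomputable def Cfb (β : ℝ) : ℝ := -β * Real.log β + (Real.log β + 1) * (β - 1)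

noncomputable def ftilde (β ω : ℝ) : ℝ :=
  if β ≤ ω then ω * Real.log ω + Cfb β
  else (Real.log β + 1) * (ω - 1)

/-- `h(ω) = ω·e − ω·log ω − α·f̃_β(ω)` (note `Real.log 0 = 0`, matching `0·log 0 = 0`). -/
noncomputable def h (e α β ω : ℝ) : ℝ := ω * e - ω * Real.log ω - α * ftilde β ω

open Real

theorem mul_sub_mul_log_lt_exp_sub_one {c ω : ℝ} (hω : 0 ≤ ω) (hne : ω ≠ exp (c - 1)) :
    ω * c - ω * log ω < exp (c - 1) := by
  rcases hω.eq_or_lt with rfl | hω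
  · simpa using exp_pos (c - 1)
  have ht : c - 1 - log ω ≠ 0 := by
    intro ht
    apply hne
    rw [← exp_log hω]
    congr 1
    linarith
  have hscale : ω * exp (c - 1 - log ω) = exp (c - 1) := by
    rw [exp_sub, exp_log hω]
    field_simp
  calc ω * c - ω * log ω = ω * (c - 1 - log ω + 1) := by ring
    _ < ω * exp (c - 1 - log ω) := mul_lt_mul_of_pos_left (add_one_lt_exp ht) hω
    _ = exp (c - 1) := hscale

theorem mul_sub_mul_log_le_exp_sub_one {c ω : ℝ} (hω : 0 ≤ ω) :
    ω * c - ω * log ω ≤ exp (c - 1) := by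
  rcases eq_or_ne ω (exp (c - 1)) with rfl | hne
  · rw [log_exp]
    linarith
  · exact (mul_sub_mul_log_lt_exp_sub_one hω hne).le

theorem ftilde_of_le {β ω : ℝ} (hω : ω ≤ β) : ftilde β ω = (log β + 1) * (ω - 1) := by
  unfold ftilde
  split_ifs with hβω
  · rw [le_antisymm hω hβω, Cfb]
    ring
  · rfl

theorem tangent_le_ftilde {β ω : ℝ} (hβ : 0 < β) (hω : 0 ≤ ω) :
    (log β + 1) * (ω - 1) ≤ ftilde β ω := by
  unfold ftilde
  split_ifs
  · have htangent := mul_sub_mul_log_le_exp_sub_one (c := log β + 1) hω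
    rw [add_sub_cancel_right, exp_log hβ] at htangent
    rw [Cfb]
    linarith
  · rfl

theorem h_of_le {e α β ω : ℝ} (hω : ω ≤ β) :
    h e α β ω = ω * (e - α * (log β + 1)) - ω * log ω + α * (log β + 1) := by
  rw [h, ftilde_of_le hω]
  ring

theorem h_le {e α β ω : ℝ} (hα : 0 ≤ α) (hβ : 0 < β) (hω : 0 ≤ ω) :
    h e α β ω ≤ ω * (e - α * (log β + 1)) - ω * log ω + α * (log β + 1) := by
  have := mul_le_mul_of_nonneg_left (tangent_le_ftilde hβ hω) hα
  rw [h]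
  linarith

theorem stmt7 (e α β : ℝ) (hα : 0 < α) (hβ : 1 < β)
    (he : e ≤ (α + 1) * (Real.log β + 1)) :
    Real.exp (e - 1 - α * (Real.log β + 1)) ≤ β ∧
    (∀ ω : ℝ, 0 ≤ ω → ω ≠ Real.exp (e - 1 - α * (Real.log β + 1)) →
      h e α β ω < h e α β (Real.exp (e - 1 - α * (Real.log β + 1)))) ∧
    h e α β (Real.exp (e - 1 - α * (Real.log β + 1))) =
      Real.exp (e - 1 - α * (Real.log β + 1)) + α * (Real.log β + 1) := by
  have hβ₀ : 0 < β := zero_lt_one.trans hβ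
  set c := e - α * (log β + 1)
  rw [sub_right_comm]
  have hle : exp (c - 1) ≤ β := by
    rw [← exp_log hβ₀, exp_le_exp]
    linarith
  have hmax : h e α β (exp (c - 1)) = exp (c - 1) + α * (log β + 1) := by
    rw [h_of_le hle, log_exp]
    ring
  refine ⟨hle, fun ω hω hne => ?_, hmax⟩
  rw [hmax]
  calc h e α β ω ≤ ω * c - ω * log ω + α * (log β + 1) := h_le hα.le hβ₀ hω
    _ < exp (c - 1) + α * (log β + 1) := by
      gcongr
      exact mul_sub_mul_log_lt_exp_sub_one hω hne
end

section
/- Let e ∈ ℝ, α > 0, β > 1, r > 0. Then the function h† is strictly concave on (0, ∞). -/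
/-- `h†(ω) = ω·e − ω·log ω − α·r·f̃_β(ω/r)`. -/
noncomputable def hdag (e α β r ω : ℝ) : ℝ :=
  ω * e - ω * Real.log ω - α * r * ftilde β (ω / r)

/-!
`h†(ω) = −ω log ω + (ω e − α r f̃_β(ω/r))`. The first term is strictly concave. The linear branch
of `f̃_β` is the tangent line at `β` of `ω ↦ ω log ω + C_{f,β}`, so `f̃_β` is differentiable on all
of `ℝ` with the monotone derivative `log (max ω β) + 1`, hence convex;
precomposing with `ω ↦ ω / r` and scaling by `α r > 0` keeps it convex, and a linear term does not affect concavity.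
-/

open Real Set

section ftilde

variable {β : ℝ}

lemma ftilde_eqOn_Iic : EqOn (ftilde β) (fun ω => (log β + 1) * (ω - 1)) (Iic β) := by
  intro ω hω
  rcases (mem_Iic.mp hω).lt_or_eq with hlt | rfl
  · simp [ftilde, not_le.mpr hlt]
  · simp only [ftilde, le_refl, if_true, Cfb]
    ring

lemma ftilde_eqOn_Ici : EqOn (ftilde β) (fun ω => ω * log ω + Cfb β) (Ici β) := by
  intro ω hω
  simp [ftilde, mem_Ici.mp hω]

lemma ftilde_hasDerivWithinAt_Iic {x : ℝ} (hx : x ≤ β) :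
    HasDerivWithinAt (ftilde β) (log β + 1) (Iic β) x := by
  have h : HasDerivAt (fun ω => (log β + 1) * (ω - 1)) (log β + 1) x := by
    simpa using ((hasDerivAt_id x).sub_const 1).const_mul (log β + 1)
  exact h.hasDerivWithinAt.congr_of_mem ftilde_eqOn_Iic hx

lemma ftilde_hasDerivWithinAt_Ici (hβ : 0 < β) {x : ℝ} (hx : β ≤ x) :
    HasDerivWithinAt (ftilde β) (log x + 1) (Ici β) x :=
  ((hasDerivAt_mul_log (hβ.trans_le hx).ne').add_const _).hasDerivWithinAt.congr_of_mem
    ftilde_eqOn_Ici hx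

lemma ftilde_hasDerivAt (hβ : 0 < β) (x : ℝ) : HasDerivAt (ftilde β) (log (max x β) + 1) x := by
  rcases lt_trichotomy x β with h | rfl | h
  · rw [max_eq_right h.le]
    exact (ftilde_hasDerivWithinAt_Iic h.le).hasDerivAt (Iic_mem_nhds h)
  · rw [max_self]
    have h := (ftilde_hasDerivWithinAt_Iic le_rfl).union (ftilde_hasDerivWithinAt_Ici hβ le_rfl)
    rw [Iic_union_Ici] at h
    exact h.hasDerivAt Filter.univ_mem
  · rw [max_eq_left h.le]
    exact (ftilde_hasDerivWithinAt_Ici hβ h.le).hasDerivAt (Ici_mem_nhds h)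

lemma ftilde_convexOn (hβ : 0 < β) : ConvexOn ℝ univ (ftilde β) := by
  refine Monotone.convexOn_univ_of_deriv (fun x => (ftilde_hasDerivAt hβ x).differentiableAt) ?_
  intro x y hxy
  rw [(ftilde_hasDerivAt hβ x).deriv, (ftilde_hasDerivAt hβ y).deriv]
  gcongr

lemma ftilde_convexOn_comp_div (hβ : 0 < β) (r : ℝ) : ConvexOn ℝ univ (fun ω => ftilde β (ω / r)) :=
  ((ftilde_convexOn hβ).comp_linearMap (LinearMap.lsmul ℝ ℝ r⁻¹)).congr fun ω _ => by
    simp [div_eq_inv_mul]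

end ftilde

theorem stmt12 (e α β r : ℝ) (hα : 0 < α) (hβ : 1 < β) (hr : 0 < r) :
    StrictConcaveOn ℝ (Set.Ioi (0 : ℝ)) (hdag e α β r) := by
  have hentropy : StrictConcaveOn ℝ (Ioi 0) negMulLog :=
    strictConcaveOn_negMulLog.subset Ioi_subset_Ici_self (convex_Ioi 0)
  have hlinear : ConcaveOn ℝ (Ioi 0) (fun ω : ℝ => ω * e) :=
    (LinearMap.id.smulRight e).concaveOn (convex_Ioi 0)
  have hrelaxed : ConvexOn ℝ (Ioi 0) (fun ω => α * r * ftilde β (ω / r)) :=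
    ((ftilde_convexOn_comp_div (zero_lt_one.trans hβ) r).subset (subset_univ _)
      (convex_Ioi 0)).smul (mul_pos hα hr).le
  refine (hentropy.add_concaveOn (hlinear.sub hrelaxed)).congr fun ω _ => ?_
  simp only [hdag, negMulLog, Pi.add_apply, Pi.sub_apply]
  ring
end
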